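/- Let (X,d) be a metric space with |X| ≥ 3 and T : X → X satisfying P(Tx,Ty,Tz) < P(x,y,z) for all pairwise distinct x,y,z. If a Picard orbit xₙ (with all xₙ pairwise distinct) converges to x* and xₙ ≠ x* for all n, then x* is a fixed point of T. -/

import Mathlib

/-!
Applying the contraction to the triple `(xₙ₊₁, xₙ, x*)`, which is pairwise distinct, bounds
`d(xₙ₊₂, Tx*)` by the perimeter `P(xₙ₊₁, xₙ, x*)`, which tends to `P(x*, x*, x*) = 0`.
Hence `xₙ₊₂ → Tx*`, and `Tx* = x*` by uniqueness of limits.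
-/

open Filter Topology

section Perimeter

variable {X : Type*} [PseudoMetricSpace X]

def perimeter (a b c : X) : ℝ := dist a b + dist b c + dist a c

lemma dist_le_perimeter (a b c : X) : dist a c ≤ perimeter a b c := by
  unfold perimeter
  linarith [dist_nonneg (x := a) (y := b), dist_nonneg (x := b) (y := c)]

lemma tendsto_perimeter_zero {ι : Type*} {l : Filter ι} {u v : ι → X} {a : X}
    (hu : Tendsto u l (𝓝 a)) (hv : Tendsto v l (𝓝 a)) :
    Tendsto (fun i => perimeter (u i) (v i) a) l (𝓝 0) := by
  simpa [perimeter] using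
    ((hu.dist hv).add (hv.dist (tendsto_const_nhds (x := a)))).add
      (hu.dist (tendsto_const_nhds (x := a)))

end Perimeter

theorem stmt_15_general {X : Type*} [MetricSpace X] (T : X → X)
    (h : ∀ x y z : X, x ≠ y → y ≠ z → x ≠ z →
      dist (T x) (T y) + dist (T y) (T z) + dist (T x) (T z) <
        dist x y + dist y z + dist x z)
    (x : ℕ → X) (hx : ∀ n, x (n + 1) = T (x n))
    (hdist : ∀ m n : ℕ, m ≠ n → x m ≠ x n)
    (xs : X) (hlim : Filter.Tendsto x Filter.atTop (nhds xs))
    (hne : ∀ n, x n ≠ xs) :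
    T xs = xs := by
  have hbound : ∀ n, dist (x (n + 2)) (T xs) ≤ perimeter (x (n + 1)) (x n) xs := fun n =>
    calc dist (x (n + 2)) (T xs) = dist (T (x (n + 1))) (T xs) := by rw [hx]
      _ ≤ perimeter (T (x (n + 1))) (T (x n)) (T xs) := dist_le_perimeter _ _ _
      _ ≤ perimeter (x (n + 1)) (x n) xs :=
        (h _ _ _ (hdist _ _ n.succ_ne_self) (hne n) (hne (n + 1))).le
  have hlim_T : Tendsto (fun n => x (n + 2)) atTop (𝓝 (T xs)) :=
    tendsto_iff_dist_tendsto_zero.2 <| squeeze_zero (fun _ => dist_nonneg) hbound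
      (tendsto_perimeter_zero (hlim.comp (tendsto_add_atTop_nat 1)) hlim)
  exact tendsto_nhds_unique hlim_T (hlim.comp (tendsto_add_atTop_nat 2))

theorem stmt_15 {X : Type*} [MetricSpace X] (T : X → X)
    (h3 : ∃ a b c : X, a ≠ b ∧ b ≠ c ∧ a ≠ c)
    (h : ∀ x y z : X, x ≠ y → y ≠ z → x ≠ z →
      dist (T x) (T y) + dist (T y) (T z) + dist (T x) (T z) <
        dist x y + dist y z + dist x z)
    (x : ℕ → X) (hx : ∀ n, x (n + 1) = T (x n))
    (hdist : ∀ m n : ℕ, m ≠ n → x m ≠ x n)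
    (xs : X) (hlim : Filter.Tendsto x Filter.atTop (nhds xs))
    (hne : ∀ n, x n ≠ xs) :
    T xs = xs :=
  stmt_15_general T h x hx hdist xs hlim hne
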